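/- arXiv:1701.00670 — 4 statements merged into one kernel-verified Lean document; each statement's English description precedes it below -/
import Mathlib

section
/- Let π : T(ℝ²×S¹) × (ℝ×S¹) → T(ℝ²×S¹) be the canonical projection, and let 𝔉(x,y,θ,ẋ,ẏ,θ̇,u,φ) = (ẋ − u cos θ, ẏ − u sin θ, θ̇ − (u/l) tan φ) (with l > 0 and φ ≠ ±π/2) and F(x,y,θ,ẋ,ẏ,θ̇) = ẋ sin θ − ẏ cos θ. Then π(Z(𝔉)) = Z(F) \ 𝔷, where Z denotes the zero set and 𝔷 = {(x,y,θ,ẋ,ẏ,θ̇) : ẋ = 0, ẏ = 0, θ̇ ≠ 0}. -/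
open Real Set

/-- The projection of the zero set of the explicit car system `𝔉` onto the
tangent space equals the zero set of the implicit equation `F` minus the set
`𝔷 = {ẋ = ẏ = 0, θ̇ ≠ 0}`.  A point of `T(ℝ²×S¹) × (ℝ×S¹)` is coded as
`((x, y, θ, ẋ, ẏ, θ̇), (u, φ))`, with `φ ≠ ±π/2` expressed as `cos φ ≠ 0`. -/
theorem car_projection_zero_sets (l : ℝ) (hl : 0 < l) :
    (Prod.fst '' {q : (ℝ × ℝ × ℝ × ℝ × ℝ × ℝ) × ℝ × ℝ |
        Real.cos q.2.2 ≠ 0 ∧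
        q.1.2.2.2.1 = q.2.1 * Real.cos q.1.2.2.1 ∧
        q.1.2.2.2.2.1 = q.2.1 * Real.sin q.1.2.2.1 ∧
        q.1.2.2.2.2.2 = q.2.1 / l * Real.tan q.2.2}) =
      {p : ℝ × ℝ × ℝ × ℝ × ℝ × ℝ |
        p.2.2.2.1 * Real.sin p.2.2.1 - p.2.2.2.2.1 * Real.cos p.2.2.1 = 0} \
      {p : ℝ × ℝ × ℝ × ℝ × ℝ × ℝ |
        p.2.2.2.1 = 0 ∧ p.2.2.2.2.1 = 0 ∧ p.2.2.2.2.2 ≠ 0} := by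
  ext p
  obtain ⟨x, y, θ, vx, vy, vθ⟩ := p
  simp only [mem_image, mem_setOf_eq, mem_diff]
  constructor
  · rintro ⟨⟨q, u, φ⟩, ⟨hφ, h1, h2, h3⟩, rfl⟩
    dsimp at *
    refine ⟨by rw [h1, h2]; ring, ?_⟩
    rintro ⟨hx, hy, hθ⟩
    have hu : u = 0 := by
      have ht := (sin_sq_add_cos_sq θ)
      have e1 : u * Real.cos θ = 0 := by rw [← h1]; exact hx
      have e2 : u * Real.sin θ = 0 := by rw [← h2]; exact hy
      nlinarith [sq_nonneg u, ht, e1, e2]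
    exact hθ (by simp [h3, hu])
  · rintro ⟨hF, hz⟩
    dsimp at hF hz
    -- choose u
    have key : ∃ u : ℝ, vx = u * Real.cos θ ∧ vy = u * Real.sin θ := by
      rcases eq_or_ne (Real.cos θ) 0 with hc | hc
      · have hs : Real.sin θ ≠ 0 := by
          intro hs
          have := sin_sq_add_cos_sq θ
          rw [hs, hc] at this; norm_num at this
        refine ⟨vy / Real.sin θ, ?_, by field_simp⟩
        have hx0 : vx = 0 := by
          have : vx * Real.sin θ = 0 := by rw [hc] at hF; linarith
          rcases mul_eq_zero.mp this with h | h
          · exact h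
          · exact absurd h hs
        rw [hx0, hc]; ring
      · refine ⟨vx / Real.cos θ, by field_simp, ?_⟩
        field_simp
        linarith [hF]
    obtain ⟨u, hux, huy⟩ := key
    rcases eq_or_ne u 0 with hu | hu
    · have hθ0 : vθ = 0 := by
        by_contra h
        exact hz ⟨by simp [hux, hu], by simp [huy, hu], h⟩
      exact ⟨((x, y, θ, vx, vy, vθ), 0, 0), ⟨by norm_num, by simpa [hu] using hux,
        by simpa [hu] using huy, by simp [hθ0]⟩, rfl⟩
    · refine ⟨((x, y, θ, vx, vy, vθ), u, Real.arctan (l * vθ / u)),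
        ⟨(Real.cos_arctan _ ▸ ?_), hux, huy, ?_⟩, rfl⟩
      · positivity
      · rw [Real.tan_arctan]
        field_simp
end

section
/- Let z₁ = θ and z₂ = x sin θ − y cos θ, and suppose θ̇ ≠ 0 and the trajectory satisfies ẋ sin θ = ẏ cos θ. Then ż₂ = (ẋ sin θ − ẏ cos θ) + θ̇(x cos θ + y sin θ) = θ̇(x cos θ + y sin θ), ż₁ = θ̇, and consequently x = (ż₂/ż₁) cos z₁ + z₂ sin z₁ and y = (ż₂/ż₁) sin z₁ − z₂ cos z₁. -/
open Real

/-! Differentiating `z₂ = x sin θ − y cos θ` gives `ż₂ = (ẋ sin θ − ẏ cos θ) + θ̇ (x cos θ + y sin θ)`,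
whose first bracket vanishes by the constraint. Hence `ż₂ / ż₁` and `z₂` are the coordinates of
`(x, y)` in the frame rotated by `θ`, and rotating back recovers `x` and `y`. -/

theorem hasDerivAt_mul_sin_sub_mul_cos {x y θ : ℝ → ℝ} {x' y' θ' t : ℝ}
    (hx : HasDerivAt x x' t) (hy : HasDerivAt y y' t) (hθ : HasDerivAt θ θ' t) :
    HasDerivAt (fun s => x s * sin (θ s) - y s * cos (θ s))
      (x' * sin (θ t) - y' * cos (θ t) + θ' * (x t * cos (θ t) + y t * sin (θ t))) t :=
  ((hx.mul hθ.sin).sub (hy.mul hθ.cos)).congr_deriv (by ring)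

theorem rotate_inverse_fst (a b φ : ℝ) :
    a = (a * cos φ + b * sin φ) * cos φ + (a * sin φ - b * cos φ) * sin φ := by
  linear_combination (-a) * sin_sq_add_cos_sq φ

theorem rotate_inverse_snd (a b φ : ℝ) :
    b = (a * cos φ + b * sin φ) * sin φ - (a * sin φ - b * cos φ) * cos φ := by
  linear_combination (-b) * sin_sq_add_cos_sq φ

/-- Third chart of the car atlas: with `z₁ = θ` and `z₂ = x sin θ − y cos θ`, along a
trajectory satisfying `ẋ sin θ = ẏ cos θ` with `θ̇ ≠ 0`, one has
`ż₂ = θ̇ (x cos θ + y sin θ)` and the state is recovered from `(z₁, z₂, ż₁, ż₂)`. -/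
theorem car_chart3_inverse (x y θ : ℝ → ℝ) (t : ℝ)
    (hx : DifferentiableAt ℝ x t) (hy : DifferentiableAt ℝ y t)
    (hθ : DifferentiableAt ℝ θ t)
    (hF : deriv x t * Real.sin (θ t) = deriv y t * Real.cos (θ t))
    (hθd : deriv θ t ≠ 0) :
    deriv (fun s => x s * Real.sin (θ s) - y s * Real.cos (θ s)) t =
        deriv θ t * (x t * Real.cos (θ t) + y t * Real.sin (θ t)) ∧
      deriv θ t = deriv θ t ∧
      x t = (deriv (fun s => x s * Real.sin (θ s) - y s * Real.cos (θ s)) t / deriv θ t)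
              * Real.cos (θ t) + (x t * Real.sin (θ t) - y t * Real.cos (θ t)) * Real.sin (θ t) ∧
      y t = (deriv (fun s => x s * Real.sin (θ s) - y s * Real.cos (θ s)) t / deriv θ t)
              * Real.sin (θ t) - (x t * Real.sin (θ t) - y t * Real.cos (θ t)) * Real.cos (θ t) := by
  have hż₂ : deriv (fun s => x s * sin (θ s) - y s * cos (θ s)) t =
      deriv θ t * (x t * cos (θ t) + y t * sin (θ t)) := by
    rw [(hasDerivAt_mul_sin_sub_mul_cos hx.hasDerivAt hy.hasDerivAt hθ.hasDerivAt).deriv, hF,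
      sub_self, zero_add]
  have hratio : deriv (fun s => x s * sin (θ s) - y s * cos (θ s)) t / deriv θ t =
      x t * cos (θ t) + y t * sin (θ t) := by
    rw [hż₂, mul_div_cancel_left₀ _ hθd]
  refine ⟨hż₂, rfl, ?_, ?_⟩ <;> rw [hratio]
  · exact rotate_inverse_fst (x t) (y t) (θ t)
  · exact rotate_inverse_snd (x t) (y t) (θ t)
end

section
/- For any (z₁, z₂, ż₁, ż₂) with ż₁ ≠ 0, the point (x, y, θ) = ((ż₂/ż₁) cos z₁ + z₂ sin z₁, (ż₂/ż₁) sin z₁ − z₂ cos z₁, z₁), together with velocities obtained by formally differentiating these expressions (i.e. θ̇ = ż₁, ẋ and ẏ the corresponding derivatives), satisfies the implicit car equation ẋ sin θ − ẏ cos θ = 0. -/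
/-! The formal velocity of `φ₃` splits along the frame `(cos θ, sin θ)`, `(sin θ, -cos θ)`,
with normal coefficient `ż₂ - (ż₂ / ż₁) ż₁`, and `ẋ sin θ - ẏ cos θ` reads off exactly that
coefficient, which vanishes because `ż₁ ≠ 0`. -/

open Real

theorem sin_cos_frame_normal_component (α β θ : ℝ) :
    (α * cos θ + β * sin θ) * sin θ - (α * sin θ - β * cos θ) * cos θ = β := by
  linear_combination β * sin_sq_add_cos_sq θ

/-- The image of the third chart inverse `φ₃`, with velocities obtained by formal
differentiation (for arbitrary values of `zdd₁, zdd₂`), satisfies the implicit car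
equation `ẋ sin θ − ẏ cos θ = 0`. -/
theorem car_chart3_maps_into_zero_set (z₁ z₂ zd₁ zd₂ zdd₁ zdd₂ : ℝ) (h : zd₁ ≠ 0) :
    (((zdd₂ * zd₁ - zd₂ * zdd₁) / zd₁ ^ 2) * Real.cos z₁ - (zd₂ / zd₁) * Real.sin z₁ * zd₁
        + zd₂ * Real.sin z₁ + z₂ * Real.cos z₁ * zd₁) * Real.sin z₁ -
      (((zdd₂ * zd₁ - zd₂ * zdd₁) / zd₁ ^ 2) * Real.sin z₁ + (zd₂ / zd₁) * Real.cos z₁ * zd₁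
        - zd₂ * Real.cos z₁ + z₂ * Real.sin z₁ * zd₁) * Real.cos z₁ = 0 := by
  set α := (zdd₂ * zd₁ - zd₂ * zdd₁) / zd₁ ^ 2 + z₂ * zd₁
  set β := zd₂ - zd₂ / zd₁ * zd₁ with hβ
  calc _ = (α * cos z₁ + β * sin z₁) * sin z₁ - (α * sin z₁ - β * cos z₁) * cos z₁ := by ring
    _ = β := sin_cos_frame_normal_component α β z₁
    _ = 0 := by rw [hβ, div_mul_cancel₀ zd₂ h, sub_self]
end

section
/- On the overlap {ẋ ≠ 0} ∩ {θ̇ ≠ 0} of the first and third charts of the car atlas, the transition map is smooth: if (x, y) are the flat outputs of chart 1 and (z₁, z₂) = (θ, x sin θ − y cos θ) those of chart 3, then along any smooth solution of ẋ sin θ − ẏ cos θ = 0 with ẋ ≠ 0 and θ̇ ≠ 0, the map (x, y, ẋ, ẏ, ẍ, ÿ) ↦ (z₁, z₂) is given by z₁ = arctan(ẏ/ẋ) (mod π) and z₂ = x sin z₁ − y cos z₁, and is smooth wherever ẋ ≠ 0. -/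
open Real

/-- On the overlap `{ẋ ≠ 0} ∩ {θ̇ ≠ 0}`, the transition map from chart 1 to chart 3
is given by `z₁ = arctan (ẏ/ẋ)` (mod `π`) and `z₂ = x sin z₁ − y cos z₁`, and the
map `(x, y, ẋ, ẏ, ẍ, ÿ) ↦ (z₁, z₂)` is smooth wherever `ẋ ≠ 0`. -/
theorem car_transition_smooth (x y θ xd yd θd : ℝ)
    (hF : xd * Real.sin θ - yd * Real.cos θ = 0) (hxd : xd ≠ 0) (hθd : θd ≠ 0) :
    (∃ k : ℤ, θ = Real.arctan (yd / xd) + k * π) ∧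
      ContDiffOn ℝ (⊤ : ℕ∞)
        (fun p : ℝ × ℝ × ℝ × ℝ × ℝ × ℝ =>
          (Real.arctan (p.2.2.2.1 / p.2.2.1),
            p.1 * Real.sin (Real.arctan (p.2.2.2.1 / p.2.2.1)) -
              p.2.1 * Real.cos (Real.arctan (p.2.2.2.1 / p.2.2.1))))
        {p : ℝ × ℝ × ℝ × ℝ × ℝ × ℝ | p.2.2.1 ≠ 0} := by
  constructor
  · -- cos θ ≠ 0
    have hcos : Real.cos θ ≠ 0 := by
      intro h
      have hs : Real.sin θ = 1 ∨ Real.sin θ = -1 := by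
        have := Real.sin_sq_add_cos_sq θ
        rw [h] at this
        have : Real.sin θ ^ 2 = 1 := by nlinarith
        have h0 : (Real.sin θ - 1) * (Real.sin θ + 1) = 0 := by nlinarith
        rcases mul_eq_zero.mp h0 with h1 | h1
        · exact Or.inl (by linarith)
        · exact Or.inr (by linarith)
      rcases hs with h1 | h1 <;> rw [h, h1] at hF <;> simp at hF <;> exact hxd hF
    have htan : Real.tan θ = yd / xd := by
      rw [Real.tan_eq_sin_div_cos]
      field_simp at hF ⊢
      linarith [hF]
    -- choose k with θ - kπ ∈ (-π/2, π/2)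
    set k : ℤ := round (θ / π) with hk
    have hπ : (0:ℝ) < π := Real.pi_pos
    have hb := abs_sub_round (θ / π)
    have h1 : |θ / π - k| ≤ 1/2 := hb
    have hdm : θ / π * π = θ := div_mul_cancel₀ θ hπ.ne'
    have hub : θ - k * π ≤ π / 2 := by
      have h2 : θ / π - k ≤ 1/2 := (abs_le.mp h1).2
      nlinarith [mul_le_mul_of_nonneg_right h2 hπ.le]
    have hlb : -(π/2) ≤ θ - k * π := by
      have h2 : -(1/2) ≤ θ / π - k := (abs_le.mp h1).1
      nlinarith [mul_le_mul_of_nonneg_right h2 hπ.le]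
    have hne : θ - k * π ≠ π / 2 ∧ θ - k * π ≠ -(π/2) := by
      constructor <;> intro h
      · have : Real.cos θ = 0 := by
          have : θ = π/2 + k * π := by linarith
          rw [this, Real.cos_add_int_mul_pi]
          simp
        exact hcos this
      · have : Real.cos θ = 0 := by
          have : θ = -(π/2) + k * π := by linarith
          rw [this, Real.cos_add_int_mul_pi]
          simp
        exact hcos this
    have hlt : θ - k * π < π / 2 := lt_of_le_of_ne hub hne.1
    have hgt : -(π/2) < θ - k * π := lt_of_le_of_ne hlb (Ne.symm hne.2)
    refine ⟨k, ?_⟩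
    have : Real.arctan (yd / xd) = θ - k * π := by
      rw [← htan, ← Real.tan_sub_int_mul_pi θ k]
      exact Real.arctan_tan hgt hlt
    linarith
  · have hdiv : ContDiffOn ℝ (⊤ : ℕ∞)
        (fun p : ℝ × ℝ × ℝ × ℝ × ℝ × ℝ => p.2.2.2.1 / p.2.2.1)
        {p : ℝ × ℝ × ℝ × ℝ × ℝ × ℝ | p.2.2.1 ≠ 0} := by
      apply ContDiffOn.div
      · fun_prop
      · fun_prop
      · intro p hp; exact hp
    have harc : ContDiffOn ℝ (⊤ : ℕ∞)
        (fun p : ℝ × ℝ × ℝ × ℝ × ℝ × ℝ => Real.arctan (p.2.2.2.1 / p.2.2.1))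
        {p : ℝ × ℝ × ℝ × ℝ × ℝ × ℝ | p.2.2.1 ≠ 0} :=
      Real.contDiff_arctan.comp_contDiffOn hdiv
    refine ContDiffOn.prodMk harc ?_
    apply ContDiffOn.sub
    · exact ContDiffOn.mul (by fun_prop) (Real.contDiff_sin.comp_contDiffOn harc)
    · exact ContDiffOn.mul (by fun_prop) (Real.contDiff_cos.comp_contDiffOn harc)
end
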